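/- Let Φ be a quadratic form on ℝ^{n×m}. Then Φ is polyconvex, i.e., there exist n×m real matrices M₁, …, M_k and real coefficients c_{ikjl} (indexed by 1 ≤ i < k ≤ n, 1 ≤ j < l ≤ m) such that Φ(Z) = Σᵢ ⟨Z, Mᵢ⟩² + Σ_{i<k, j<l} c_{ikjl} (Z_{ij} Z_{kl} − Z_{il} Z_{kj}) for all Z, if and only if the biquadratic F(x,y) = Φ(x yᵀ) is a sum of squares, i.e., there exist n×m real matrices N₁, …, N_r such that Φ(x yᵀ) = Σⱼ ⟨x, Nⱼ y⟩² for all x ∈ ℝⁿ, y ∈ ℝᵐ. -/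

import Mathlib

open Matrix

/-- The standard inner product `⟨A, B⟩ = trace (A Bᵀ)` on matrices. -/
def matInner {n m : ℕ} (A B : Matrix (Fin n) (Fin m) ℝ) : ℝ := (A * Bᵀ).trace

/-- A quadratic form on `n × m` real matrices: `Φ Z = ⟨Z, C Z⟩` for a symmetric
linear map `C` on matrices. -/
def IsMatQuadraticForm (n m : ℕ) (Φ : Matrix (Fin n) (Fin m) ℝ → ℝ) : Prop :=
  ∃ C : Matrix (Fin n) (Fin m) ℝ →ₗ[ℝ] Matrix (Fin n) (Fin m) ℝ,
    (∀ A B, matInner A (C B) = matInner (C A) B) ∧ ∀ Z, Φ Z = matInner Z (C Z)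

/-!
Polyconvex ⇒ SOS: the `2 × 2` minors vanish on rank-one matrices and
`⟨x yᵀ, M⟩ = x ⬝ᵥ M y`.

SOS ⇒ polyconvex: if `Φ (x yᵀ) = ∑ₜ ⟨x yᵀ, Nₜ⟩²`, then the symmetric bilinear form
`B = B_Φ - ∑ₜ Nₜ ⊗ Nₜ` vanishes on rank-one matrices. Polarizing first in `x` and then in `y`
gives `B(Eᵢⱼ, Eₖₗ) = -B(Eᵢₗ, Eₖⱼ)`, so
`2 B(Z, Z) = ∑ B(Eᵢⱼ, Eₖₗ) (Zᵢⱼ Zₖₗ - Zᵢₗ Zₖⱼ)` over all `i, j, k, l`. Every term of this sum is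
invariant under `i ↔ k` and under `j ↔ l` and vanishes when `i = k` or `j = l`, so the sum is four
times its part over `i < k, j < l`.
-/

open LinearMap (BilinForm)

theorem Finset.sum_sum_eq_two_nsmul_sum_sum_lt {α M : Type*} [Fintype α] [LinearOrder α]
    [AddCommMonoid M] (g : α → α → M) (hdiag : ∀ i, g i i = 0)
    (hsymm : ∀ i k, g i k = g k i) :
    ∑ i, ∑ k, g i k = 2 • ∑ i, ∑ k, if i < k then g i k else 0 := by
  have hsplit : ∀ i k, g i k = (if i < k then g i k else 0) + if k < i then g k i else 0 := by
    intro i k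
    rcases lt_trichotomy i k with h | rfl | h
    · simp [h, h.not_gt]
    · simp [hdiag]
    · simp [h, h.not_gt, hsymm i k]
  calc ∑ i, ∑ k, g i k
      = ∑ i, ∑ k, ((if i < k then g i k else 0) + if k < i then g k i else 0) :=
        Finset.sum_congr rfl fun i _ => Finset.sum_congr rfl fun k _ => hsplit i k
    _ = _ := by
        rw [two_nsmul]
        simp only [Finset.sum_add_distrib]
        rw [Finset.sum_comm (f := fun i k => if k < i then g k i else 0)]

theorem Finset.sum_sum_sum_sum_eq_four_nsmul {α β M : Type*} [Fintype α] [LinearOrder α]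
    [Fintype β] [LinearOrder β] [AddCommMonoid M] (g : α → α → β → β → M)
    (hdiag₁ : ∀ i j l, g i i j l = 0) (hdiag₂ : ∀ i k j, g i k j j = 0)
    (hsymm₁ : ∀ i k j l, g i k j l = g k i j l) (hsymm₂ : ∀ i k j l, g i k j l = g i k l j) :
    ∑ i, ∑ k, ∑ j, ∑ l, g i k j l =
      4 • ∑ i, ∑ k, ∑ j, ∑ l, if i < k ∧ j < l then g i k j l else 0 := by
  simp_rw [Finset.sum_sum_eq_two_nsmul_sum_sum_lt (g _ _) (hdiag₂ _ _) (hsymm₂ _ _),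
    ← Finset.smul_sum]
  rw [Finset.sum_sum_eq_two_nsmul_sum_sum_lt _ (by simp [hdiag₁]) (by simp [hsymm₁]),
    smul_smul]
  refine congrArg _ (Finset.sum_congr rfl fun i _ => Finset.sum_congr rfl fun k _ => ?_)
  by_cases h : i < k <;> simp [h]

section BilinForm

variable {ι κ R : Type*}

theorem Matrix.eq_sum_smul_single [Fintype ι] [Fintype κ] [DecidableEq ι]
    [DecidableEq κ] [Semiring R] (Z : Matrix ι κ R) :
    Z = ∑ i, ∑ j, Z i j • Matrix.single i j (1 : R) := by
  simpa [smul_single] using matrix_eq_sum_single Z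

theorem LinearMap.BilinForm.apply_eq_sum_single [Fintype ι] [Fintype κ] [DecidableEq ι]
    [DecidableEq κ] [CommSemiring R] (B : BilinForm R (Matrix ι κ R)) (X Y : Matrix ι κ R) :
    B X Y =
      ∑ i, ∑ j, ∑ k, ∑ l, B (Matrix.single i j 1) (Matrix.single k l 1) * X i j * Y k l := by
  conv_lhs => rw [X.eq_sum_smul_single]
  simp only [map_sum, LinearMap.sum_apply, map_smul, LinearMap.smul_apply, smul_eq_mul]
  refine Finset.sum_congr rfl fun i _ => Finset.sum_congr rfl fun j _ => ?_
  conv_lhs => rw [Y.eq_sum_smul_single]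
  simp only [map_sum, map_smul, smul_eq_mul, Finset.mul_sum]
  exact Finset.sum_congr rfl fun k _ => Finset.sum_congr rfl fun l _ => by ring

theorem LinearMap.BilinForm.apply_vecMulVec_add_apply_vecMulVec_swap_eq_zero [CommRing R]
    [NoZeroDivisors R] [NeZero (2 : R)] {B : BilinForm R (Matrix ι κ R)} (hB : B.IsSymm)
    (h : ∀ x y, B (vecMulVec x y) (vecMulVec x y) = 0) (x x' : ι → R) (y y' : κ → R) :
    B (vecMulVec x y) (vecMulVec x' y') + B (vecMulVec x y') (vecMulVec x' y) = 0 := by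
  have hrow : ∀ x x' y, B (vecMulVec x y) (vecMulVec x' y) = 0 := by
    intro x x' y
    have := h (x + x') y
    simp only [add_vecMulVec, map_add, LinearMap.add_apply, h, hB.eq (vecMulVec x' y)] at this
    have htwice : (2 : R) * B (vecMulVec x y) (vecMulVec x' y) = 0 := by
      linear_combination this
    exact (mul_eq_zero.mp htwice).resolve_left two_ne_zero
  have := hrow x x' (y + y')
  simp only [vecMulVec_add, map_add, LinearMap.add_apply, hrow] at this
  linear_combination this

theorem LinearMap.BilinForm.apply_self_eq_sum_minors [Fintype ι] [Fintype κ] [LinearOrder ι]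
    [LinearOrder κ] [CommRing R] [NoZeroDivisors R] [NeZero (2 : R)]
    {B : BilinForm R (Matrix ι κ R)} (hB : B.IsSymm)
    (h : ∀ x y, B (vecMulVec x y) (vecMulVec x y) = 0) (Z : Matrix ι κ R) :
    B Z Z = ∑ i, ∑ k, ∑ j, ∑ l, if i < k ∧ j < l then
      2 * B (Matrix.single i j 1) (Matrix.single k l 1) * (Z i j * Z k l - Z i l * Z k j)
      else 0 := by
  set a : ι → κ → ι → κ → R := fun i j k l => B (Matrix.single i j 1) (Matrix.single k l 1)
    with ha
  have hsymm : ∀ i j k l, a k l i j = a i j k l := fun i j k l => hB.eq _ _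
  have hanti : ∀ i j k l, a i l k j = -a i j k l := fun i j k l => by
    simp only [ha, single_eq_single_vecMulVec_single]
    linear_combination B.apply_vecMulVec_add_apply_vecMulVec_swap_eq_zero hB h _ _ _ _
  have hexp : B Z Z = ∑ i, ∑ k, ∑ j, ∑ l, a i j k l * Z i j * Z k l := by
    rw [B.apply_eq_sum_single]
    exact Finset.sum_congr rfl fun i _ => Finset.sum_comm
  have hcross : ∑ i, ∑ k, ∑ j, ∑ l, a i j k l * (Z i l * Z k j) = -B Z Z := by
    simp only [hexp, ← Finset.sum_neg_distrib]
    refine Finset.sum_congr rfl fun i _ => Finset.sum_congr rfl fun k _ => ?_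
    rw [Finset.sum_comm]
    exact Finset.sum_congr rfl fun j _ => Finset.sum_congr rfl fun l _ => by
      rw [hanti]; ring
  have htwo :
      ∑ i, ∑ k, ∑ j, ∑ l, a i j k l * (Z i j * Z k l - Z i l * Z k j) = 2 * B Z Z := by
    simp only [mul_sub, Finset.sum_sub_distrib, hcross, hexp, mul_assoc]
    ring
  have hfour := Finset.sum_sum_sum_sum_eq_four_nsmul
    (fun i k j l => a i j k l * (Z i j * Z k l - Z i l * Z k j))
    (fun i j l => by ring) (fun i k j => by ring)
    (fun i k j l => by rw [← hsymm i j k l, hanti]; ring)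
    (fun i k j l => by rw [hanti]; ring)
  rw [htwo, nsmul_eq_mul, Nat.cast_ofNat] at hfour
  refine mul_left_cancel₀ (two_ne_zero (α := R)) (hfour.trans ?_)
  simp only [Finset.mul_sum, mul_ite, mul_zero, ← mul_assoc]
  norm_num [a]

end BilinForm

section matInner

variable {n m : ℕ}

theorem matInner_comm (A B : Matrix (Fin n) (Fin m) ℝ) : matInner A B = matInner B A := by
  rw [matInner, ← trace_transpose, transpose_mul, transpose_transpose, matInner]

theorem matInner_vecMulVec (x : Fin n → ℝ) (y : Fin m → ℝ) (N : Matrix (Fin n) (Fin m) ℝ) :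
    matInner (vecMulVec x y) N = x ⬝ᵥ N *ᵥ y := by
  simp only [matInner, trace, diag_apply, mul_apply, transpose_apply, vecMulVec_apply,
    dotProduct, mulVec, Finset.mul_sum]
  exact Finset.sum_congr rfl fun i _ => Finset.sum_congr rfl fun j _ => by ring

variable (n m) in
noncomputable def matInnerBilin : BilinForm ℝ (Matrix (Fin n) (Fin m) ℝ) :=
  LinearMap.mk₂ ℝ matInner (fun _ _ _ => by simp [matInner, Matrix.add_mul])
    (fun _ _ _ => by simp [matInner]) (fun _ _ _ => by simp [matInner, Matrix.mul_add])
    (fun _ _ _ => by simp [matInner])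

@[simp]
theorem matInnerBilin_apply (A B : Matrix (Fin n) (Fin m) ℝ) :
    matInnerBilin n m A B = matInner A B := rfl

theorem IsMatQuadraticForm.exists_isSymm_bilinForm {Φ : Matrix (Fin n) (Fin m) ℝ → ℝ}
    (hq : IsMatQuadraticForm n m Φ) :
    ∃ B : BilinForm ℝ (Matrix (Fin n) (Fin m) ℝ), B.IsSymm ∧ ∀ Z, Φ Z = B Z Z := by
  obtain ⟨C, hC, hΦ⟩ := hq
  refine ⟨(matInnerBilin n m).compl₂ C, ⟨fun X Y => ?_⟩, fun Z => by simp [hΦ]⟩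
  simp only [LinearMap.compl₂_apply, matInnerBilin_apply]
  rw [hC, matInner_comm]

end matInner

/-- A quadratic form `Φ` on `n × m` real matrices is polyconvex (a sum of squares of
linear forms plus a linear combination of `2 × 2` minors) if and only if the
associated biquadratic `(x, y) ↦ Φ (x yᵀ)` is a sum of squares. -/
theorem polyconvex_iff_biquadratic_sos
    (n m : ℕ) (Φ : Matrix (Fin n) (Fin m) ℝ → ℝ)
    (hq : IsMatQuadraticForm n m Φ) :
    (∃ (p : ℕ) (M : Fin p → Matrix (Fin n) (Fin m) ℝ)
       (c : Fin n → Fin n → Fin m → Fin m → ℝ),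
      ∀ Z : Matrix (Fin n) (Fin m) ℝ,
        Φ Z = ∑ i, matInner Z (M i) ^ 2 +
          ∑ i, ∑ k, ∑ j, ∑ l,
            if i < k ∧ j < l then c i k j l * (Z i j * Z k l - Z i l * Z k j) else 0) ↔
    (∃ (r : ℕ) (N : Fin r → Matrix (Fin n) (Fin m) ℝ),
      ∀ (x : Fin n → ℝ) (y : Fin m → ℝ),
        Φ (vecMulVec x y) = ∑ j, (x ⬝ᵥ (N j).mulVec y) ^ 2) := by
  constructor
  · rintro ⟨p, M, c, hΦ⟩
    refine ⟨p, M, fun x y => ?_⟩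
    have hminor : ∀ i k j l, vecMulVec x y i j * vecMulVec x y k l -
        vecMulVec x y i l * vecMulVec x y k j = 0 := fun i k j l => by
      simp only [vecMulVec_apply]; ring
    simp [hΦ, hminor, matInner_vecMulVec]
  · rintro ⟨r, N, hΦ⟩
    obtain ⟨B, hB, hBΦ⟩ := hq.exists_isSymm_bilinForm
    let ℓ : Fin r → Module.Dual ℝ (Matrix (Fin n) (Fin m) ℝ) :=
      fun t => (matInnerBilin n m).flip (N t)
    let B' := B - ∑ t, (ℓ t).smulRight (ℓ t)
    have hB' : B'.IsSymm := ⟨fun X Y => by simp [B', hB.eq X Y, mul_comm]⟩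
    have hB'Φ : ∀ Z, B' Z Z = Φ Z - ∑ t, matInner Z (N t) ^ 2 := fun Z => by
      simp [B', ℓ, hBΦ, sq]
    have hrankOne : ∀ x y, B' (vecMulVec x y) (vecMulVec x y) = 0 := fun x y => by
      simp [hB'Φ, hΦ, matInner_vecMulVec]
    refine ⟨r, N, fun i k j l => 2 * B' (single i j 1) (single k l 1), fun Z => ?_⟩
    rw [← B'.apply_self_eq_sum_minors hB' hrankOne, hB'Φ]
    ring
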